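/- Let u(x,y) = (y³ − x³)/3 and Ω = (0,1) × (−1,0). There is no positive function σ ∈ C¹(Ω) ∩ L^∞(Ω) with div(σ∇u) = 0 in Ω. -/

import Mathlib

/-!
The equation div(σ∇u) = 0 is a transport equation for σ along the integral curves of
∇u = (-x², y²): it says Dσ(∇u) = 2(x - y)σ. The diagonal integral curve
c(t) = (1/(t+2), -1/(t+2)) stays in Ω for all t ≥ 0 and runs into the corner (0,0); along it
(σ ∘ c)' = 4/(t+2) · σ ∘ c, so σ(c(t)) = σ(c(0)) (t+2)⁴/16 is unbounded.
-/

/-- Partial derivative in x. -/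
noncomputable def pdx (f : ℝ × ℝ → ℝ) (p : ℝ × ℝ) : ℝ := fderiv ℝ f p (1, 0)
/-- Partial derivative in y. -/
noncomputable def pdy (f : ℝ × ℝ → ℝ) (p : ℝ × ℝ) : ℝ := fderiv ℝ f p (0, 1)

open Set Filter

section PartialDerivatives

variable {f g : ℝ × ℝ → ℝ} {p : ℝ × ℝ}

lemma pdx_eq_deriv (hf : DifferentiableAt ℝ f p) :
    pdx f p = deriv (fun x => f (x, p.2)) p.1 := by
  have h : HasDerivAt (fun x : ℝ => (x, p.2)) ((1 : ℝ), (0 : ℝ)) p.1 :=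
    (hasDerivAt_id p.1).prodMk (hasDerivAt_const p.1 p.2)
  exact (hf.hasFDerivAt.comp_hasDerivAt p.1 h).deriv.symm

lemma pdy_eq_deriv (hf : DifferentiableAt ℝ f p) :
    pdy f p = deriv (fun y => f (p.1, y)) p.2 := by
  have h : HasDerivAt (fun y : ℝ => (p.1, y)) ((0 : ℝ), (1 : ℝ)) p.2 :=
    (hasDerivAt_const p.2 p.1).prodMk (hasDerivAt_id p.2)
  exact (hf.hasFDerivAt.comp_hasDerivAt p.2 h).deriv.symm

lemma pdx_mul (hf : DifferentiableAt ℝ f p) (hg : DifferentiableAt ℝ g p) :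
    pdx (fun q => f q * g q) p = pdx f p * g p + f p * pdx g p := by
  rw [pdx, pdx, pdx, fderiv_fun_mul hf hg]
  simp only [add_apply, smul_apply, smul_eq_mul]
  ring

lemma pdy_mul (hf : DifferentiableAt ℝ f p) (hg : DifferentiableAt ℝ g p) :
    pdy (fun q => f q * g q) p = pdy f p * g p + f p * pdy g p := by
  rw [pdy, pdy, pdy, fderiv_fun_mul hf hg]
  simp only [add_apply, smul_apply, smul_eq_mul]
  ring

lemma fderiv_apply_eq_pdx_pdy (f : ℝ × ℝ → ℝ) (p v : ℝ × ℝ) :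
    fderiv ℝ f p v = v.1 * pdx f p + v.2 * pdy f p := by
  conv_lhs => rw [show v = v.1 • ((1 : ℝ), (0 : ℝ)) + v.2 • ((0 : ℝ), (1 : ℝ)) by simp]
  rw [map_add, map_smul, map_smul, smul_eq_mul, smul_eq_mul, pdx, pdy]

end PartialDerivatives

noncomputable def cubicPotential (p : ℝ × ℝ) : ℝ := (p.2 ^ 3 - p.1 ^ 3) / 3

lemma pdx_cubicPotential (p : ℝ × ℝ) : pdx cubicPotential p = -p.1 ^ 2 := by
  rw [pdx_eq_deriv (by unfold cubicPotential; fun_prop)]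
  simp [cubicPotential, neg_div]

lemma pdy_cubicPotential (p : ℝ × ℝ) : pdy cubicPotential p = p.2 ^ 2 := by
  rw [pdy_eq_deriv (by unfold cubicPotential; fun_prop)]
  simp [cubicPotential]

lemma div_mul_grad_cubicPotential {σ : ℝ × ℝ → ℝ} {p : ℝ × ℝ} (hσ : DifferentiableAt ℝ σ p) :
    pdx (fun q => σ q * pdx cubicPotential q) p + pdy (fun q => σ q * pdy cubicPotential q) p
      = fderiv ℝ σ p (-p.1 ^ 2, p.2 ^ 2) - 2 * (p.1 - p.2) * σ p := by
  simp only [pdx_cubicPotential, pdy_cubicPotential]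
  rw [pdx_mul hσ (by fun_prop), pdy_mul hσ (by fun_prop), fderiv_apply_eq_pdx_pdy,
    pdx_eq_deriv (f := fun q : ℝ × ℝ => -q.1 ^ 2) (by fun_prop),
    pdy_eq_deriv (f := fun q : ℝ × ℝ => q.2 ^ 2) (by fun_prop)]
  simp only [mul_neg, deriv.fun_neg', differentiableAt_fun_id, deriv_fun_pow, Nat.cast_ofNat,
    Nat.add_one_sub_one, pow_one, deriv_id'', mul_one, neg_mul]
  ring

noncomputable def diagCurve (t : ℝ) : ℝ × ℝ := ((t + 2)⁻¹, -(t + 2)⁻¹)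

lemma diagCurve_mem {t : ℝ} (ht : 0 ≤ t) : diagCurve t ∈ Ioo (0 : ℝ) 1 ×ˢ Ioo (-1 : ℝ) 0 := by
  have h : (t + 2)⁻¹ < 1 := inv_lt_one_of_one_lt₀ (by linarith)
  have h' : 0 < (t + 2)⁻¹ := by positivity
  exact ⟨⟨h', h⟩, show -1 < -(t + 2)⁻¹ by linarith, show -(t + 2)⁻¹ < 0 by linarith⟩

lemma hasDerivAt_diagCurve {t : ℝ} (ht : t ≠ -2) :
    HasDerivAt diagCurve (-(diagCurve t).1 ^ 2, (diagCurve t).2 ^ 2) t := by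
  have h : HasDerivAt (fun s : ℝ => (s + 2)⁻¹) (-1 / (t + 2) ^ 2) t := by
    have h2 : t + 2 ≠ 0 := by contrapose! ht; linarith
    exact (hasDerivAt_id' t |>.add_const 2).fun_inv h2
  refine (h.prodMk h.fun_neg).congr_deriv ?_
  simp [diagCurve, inv_pow, neg_div]

lemma hasDerivAt_comp_diagCurve {σ : ℝ × ℝ → ℝ} {t : ℝ} (ht : t ≠ -2)
    (hσ : DifferentiableAt ℝ σ (diagCurve t))
    (hdiv : pdx (fun q => σ q * pdx cubicPotential q) (diagCurve t)
      + pdy (fun q => σ q * pdy cubicPotential q) (diagCurve t) = 0) :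
    HasDerivAt (fun s => σ (diagCurve s)) (4 / (t + 2) * σ (diagCurve t)) t := by
  rw [div_mul_grad_cubicPotential hσ, sub_eq_zero] at hdiv
  refine (hσ.hasFDerivAt.comp_hasDerivAt t (hasDerivAt_diagCurve ht)).congr_deriv ?_
  have h2 : t + 2 ≠ 0 := by contrapose! ht; linarith
  rw [hdiv, diagCurve]
  field_simp
  ring

lemma mul_pow_eq_of_hasDerivAt {f : ℝ → ℝ} {a : ℝ} (ha : 0 < a) (n : ℕ)
    (hf : ∀ t, 0 ≤ t → HasDerivAt f (n / (t + a) * f t) t) {t : ℝ} (ht : 0 ≤ t) :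
    f t * a ^ n = f 0 * (t + a) ^ n := by
  have hG : ∀ s, 0 ≤ s → HasDerivAt (fun s => f s / (s + a) ^ n) 0 s := by
    intro s hs
    have hsa : s + a ≠ 0 := by positivity
    refine ((hf s hs).fun_div ((hasDerivAt_id' s).add_const a |>.fun_pow n)
      (pow_ne_zero n hsa)).congr_deriv ?_
    rcases n with _ | n
    · simp
    · rw [Nat.add_sub_cancel]
      field_simp
      ring
  have hconst := constant_of_has_deriv_right_zero (a := 0) (b := t)
    (fun s hs => (hG s hs.1).continuousAt.continuousWithinAt)
    (fun s hs => (hG s hs.1).hasDerivWithinAt) t ⟨ht, le_rfl⟩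
  simp only [zero_add] at hconst
  field_simp at hconst
  linarith

/-- for u(x,y) = (y³−x³)/3 on Ω = (0,1)×(−1,0), there is no positive bounded
C¹ conductivity σ on Ω with div(σ∇u) = 0 in Ω. -/
theorem stmt4 :
    let u : ℝ × ℝ → ℝ := fun p => (p.2 ^ 3 - p.1 ^ 3) / 3
    let Ω : Set (ℝ × ℝ) := Set.Ioo (0:ℝ) 1 ×ˢ Set.Ioo (-1:ℝ) 0
    ¬ ∃ σ : ℝ × ℝ → ℝ, (∀ p ∈ Ω, 0 < σ p) ∧ ContDiffOn ℝ 1 σ Ω ∧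
      (∃ C : ℝ, ∀ p ∈ Ω, σ p ≤ C) ∧
      (∀ p ∈ Ω, pdx (fun q => σ q * pdx u q) p + pdy (fun q => σ q * pdy u q) p = 0) := by
  intro u Ω
  rintro ⟨σ, hpos, hσ, ⟨C, hC⟩, hdiv⟩
  have hσd : ∀ p ∈ Ω, DifferentiableAt ℝ σ p := fun p hp =>
    (hσ.contDiffAt ((isOpen_Ioo.prod isOpen_Ioo).mem_nhds hp)).differentiableAt one_ne_zero
  have hgrowth : ∀ t, 0 ≤ t → σ (diagCurve t) * 2 ^ 4 = σ (diagCurve 0) * (t + 2) ^ 4 :=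
    fun t ht => mul_pow_eq_of_hasDerivAt two_pos 4 (fun s hs => by
      exact_mod_cast hasDerivAt_comp_diagCurve (by linarith) (hσd _ (diagCurve_mem hs))
        (hdiv _ (diagCurve_mem hs))) ht
  have htendsto : Tendsto (fun t : ℝ => σ (diagCurve 0) * (t + 2) ^ 4) atTop atTop :=
    ((tendsto_pow_atTop four_ne_zero).comp (tendsto_atTop_add_const_right _ 2 tendsto_id))
      |>.const_mul_atTop (hpos _ (diagCurve_mem le_rfl))
  obtain ⟨t, hlarge, ht⟩ := ((htendsto.eventually_gt_atTop (2 ^ 4 * C)).and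
    (eventually_ge_atTop 0)).exists
  linarith [hgrowth t ht, hC _ (diagCurve_mem ht)]
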